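/- For four pairwise distinct complex numbers a, b, c, d, the four inserting points A = f(d,a,b,c), B = f(a,b,c,d), C = f(b,c,d,a), D = f(c,d,a,b) satisfy cro(A,B,C,D) = −1, where cro is the classical complex cross-ratio (a-b)(b-c)^{-1}(c-d)(d-a)^{-1} and f(a,b,c,d) := ((b-a)(c-a)^{-1}√(cro(c,a,b,d)) + 1)^{-1}·((b-a)(c-a)^{-1}√(cro(c,a,b,d))·c + b) with the principal complex square root, assuming cro(c,a,b,d) ∉ ℝ_{≤0} for all cyclic permutations and all displayed denominators are nonzero. -/
import Mathlib

noncomputable section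

/-- The classical complex cross-ratio `(a-b)(b-c)⁻¹(c-d)(d-a)⁻¹`. -/
def ccro (a b c d : ℂ) : ℂ := (a - b) * (b - c)⁻¹ * (c - d) * (d - a)⁻¹

/-- The principal complex square root (positive real part for `z ∉ ℝ_{≤0}`). -/
def csqrt (z : ℂ) : ℂ := z ^ (1 / 2 : ℂ)

/-- `z ∉ ℝ_{≤0}`. -/
def NotRealNonpos (z : ℂ) : Prop := ¬(z.im = 0 ∧ z.re ≤ 0)

/-- The complex "diagonal point" `f(a,b,c,d)`. -/
def cf (a b c d : ℂ) : ℂ :=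
  ((b - a) * (c - a)⁻¹ * csqrt (ccro c a b d) + 1)⁻¹ *
    ((b - a) * (c - a)⁻¹ * csqrt (ccro c a b d) * c + b)

private lemma notRealNonpos_ne_zero {z : ℂ} (h : NotRealNonpos z) : z ≠ 0 := by
  rintro rfl; exact h ⟨rfl, le_refl 0⟩

private lemma csqrt_sq {z : ℂ} (hz : z ≠ 0) : csqrt z ^ 2 = z := by
  rw [csqrt, sq, ← Complex.cpow_add _ _ hz]
  norm_num

/-- `cf` as a single fraction. -/
private lemma cf_eq (a b c d : ℂ) (hca : c - a ≠ 0)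
    (hden : (b - a) * (c - a)⁻¹ * csqrt (ccro c a b d) + 1 ≠ 0) :
    cf a b c d = ((b - a) * csqrt (ccro c a b d) * c + b * (c - a)) /
      ((b - a) * csqrt (ccro c a b d) + (c - a)) := by
  have hden' : (b - a) * csqrt (ccro c a b d) + (c - a) ≠ 0 := by
    have h : ((b - a) * (c - a)⁻¹ * csqrt (ccro c a b d) + 1) * (c - a)
        = (b - a) * csqrt (ccro c a b d) + (c - a) := by
      field_simp
    rw [← h]; exact mul_ne_zero hden hca
  rw [cf, eq_div_iff hden']
  field_simp

private lemma cf_den_ne (a b c d : ℂ) (hca : c - a ≠ 0)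
    (hden : (b - a) * (c - a)⁻¹ * csqrt (ccro c a b d) + 1 ≠ 0) :
    (b - a) * csqrt (ccro c a b d) + (c - a) ≠ 0 := by
  have h : ((b - a) * (c - a)⁻¹ * csqrt (ccro c a b d) + 1) * (c - a)
      = (b - a) * csqrt (ccro c a b d) + (c - a) := by
    field_simp
  rw [← h]; exact mul_ne_zero hden hca

private lemma key_poly (a b c d s u : ℂ)
    (hs : s ^ 2 * ((d - a) * (c - b)) = (b - d) * (a - c))
    (hu : u ^ 2 * ((a - b) * (d - c)) = (c - a) * (b - d)) :
    ((a - b) * (d - c)) * ((d - a) * (c - b)) *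
      ((((a-d)*s*b + a*(b-d)) * ((b-a)*u + (c-a)) - ((b-a)*u*c + b*(c-a)) * ((a-d)*s + (b-d))) * (((c-b)*s*d + c*(d-b)) * ((d-c)*u + (a-c)) - ((d-c)*u*a + d*(a-c)) * ((c-b)*s + (d-b))) + (((b-a)*u*c + b*(c-a)) * ((c-b)*s + (d-b)) - ((c-b)*s*d + c*(d-b)) * ((b-a)*u + (c-a))) * (((d-c)*u*a + d*(a-c)) * ((a-d)*s + (b-d)) - ((a-d)*s*b + a*(b-d)) * ((d-c)*u + (a-c)))) = 0 := by
  linear_combination (b*c^3*d^4 + (-1)*b*c^4*d^3 + (-1)*b^2*c^2*d^4 + (-1)*b^2*c^3*d^3 + (2)*b^2*c^4*d^2 + (2)*b^3*c^2*d^3 + (-1)*b^3*c^3*d^2 + (-1)*b^3*c^4*d + (-1)*b^4*c^2*d^2 + b^4*c^3*d + (-1)*a*c^3*d^4 + a*c^4*d^3 + (-1)*a*b*c^2*d^4 + (2)*a*b*c^3*d^3 + (-1)*a*b*c^4*d^2 + (2)*a*b^2*c*d^4 + a*b^2*c^2*d^3 + (-2)*a*b^2*c^3*d^2 + (-1)*a*b^2*c^4*d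 + (-4)*a*b^3*c*d^3 + a*b^3*c^2*d^2 + (2)*a*b^3*c^3*d + a*b^3*c^4 + (2)*a*b^4*c*d^2 + (-1)*a*b^4*c^2*d + (-1)*a*b^4*c^3 + (2)*a^2*c^2*d^4 + (-1)*a^2*c^3*d^3 + (-1)*a^2*c^4*d^2 + (-1)*a^2*b*c*d^4 + (-2)*a^2*b*c^2*d^3 + a^2*b*c^3*d^2 + (2)*a^2*b*c^4*d + (-1)*a^2*b^2*d^4 + a^2*b^2*c*d^3 + a^2*b^2*c^3*d + (-1)*a^2*b^2*c^4 + (2)*a^2*b^3*d^3 + a^2*b^3*c*d^2 + (-2)*a^2*b^3*c^2*d + (-1)*a^2*b^3*c^3 + (-1)*a^2*b^4*d^2 + (-1)*a^2*b^4*c*d + (2)*a^2*b^4*c^2 + (-1)*a^3*c*d^4 + (-1)*a^3*c^2*d^3 + (2)*a^3*c^3*d^2 + a^3*b*d^4 + (2)*a^3*b*c*d^3 + a^3*b*c^2*d^2 + (-4)*a^3*b*c^3*d + (-1)*a^3*b^2*d^3 + (-2)*a^3*b^2*c*d^2 + a^3*b^2*c^2*d + (2)*a^3*b^2*c^3 +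 (-1)*a^3*b^3*d^2 + (2)*a^3*b^3*c*d + (-1)*a^3*b^3*c^2 + a^3*b^4*d + (-1)*a^3*b^4*c + a^4*c*d^3 + (-1)*a^4*c^2*d^2 + (-1)*a^4*b*d^3 + (-1)*a^4*b*c*d^2 + (2)*a^4*b*c^2*d + (2)*a^4*b^2*d^2 + (-1)*a^4*b^2*c*d + (-1)*a^4*b^2*c^2 + (-1)*a^4*b^3*d + a^4*b^3*c + (2)*u*b^2*c^2*d^4 + (-4)*u*b^2*c^3*d^3 + (2)*u*b^2*c^4*d^2 + (-2)*u*b^3*c*d^4 + (2)*u*b^3*c^2*d^3 + (2)*u*b^3*c^3*d^2 + (-2)*u*b^3*c^4*d + (2)*u*b^4*c*d^3 + (-4)*u*b^4*c^2*d^2 + (2)*u*b^4*c^3*d + (-4)*u*a*b*c^2*d^4 + (8)*u*a*b*c^3*d^3 + (-4)*u*a*b*c^4*d^2 + (2)*u*a*b^2*c*d^4 + (-2)*u*a*b^2*c^2*d^3 + (-2)*u*a*b^2*c^3*d^2 + (2)*u*a*b^2*c^4*d + (2)*u*a*b^3*d^4 + (-4)*u*a*b^3*c*d^3 + (4)*u*a*b^3*c^2*d^2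 + (-4)*u*a*b^3*c^3*d + (2)*u*a*b^3*c^4 + (-2)*u*a*b^4*d^3 + (2)*u*a*b^4*c*d^2 + (2)*u*a*b^4*c^2*d + (-2)*u*a*b^4*c^3 + (2)*u*a^2*c^2*d^4 + (-4)*u*a^2*c^3*d^3 + (2)*u*a^2*c^4*d^2 + (2)*u*a^2*b*c*d^4 + (-2)*u*a^2*b*c^2*d^3 + (-2)*u*a^2*b*c^3*d^2 + (2)*u*a^2*b*c^4*d + (-4)*u*a^2*b^2*d^4 + (4)*u*a^2*b^2*c*d^3 + (4)*u*a^2*b^2*c^3*d + (-4)*u*a^2*b^2*c^4 + (2)*u*a^2*b^3*d^3 + (-2)*u*a^2*b^3*c*d^2 + (-2)*u*a^2*b^3*c^2*d + (2)*u*a^2*b^3*c^3 + (2)*u*a^2*b^4*d^2 + (-4)*u*a^2*b^4*c*d + (2)*u*a^2*b^4*c^2 + (-2)*u*a^3*c*d^4 + (2)*u*a^3*c^2*d^3 + (2)*u*a^3*c^3*d^2 + (-2)*u*a^3*c^4*d + (2)*u*a^3*b*d^4 + (-4)*u*a^3*b*c*d^3 + (4)*u*a^3*b*c^2*d^2 +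 (-4)*u*a^3*b*c^3*d + (2)*u*a^3*b*c^4 + (2)*u*a^3*b^2*d^3 + (-2)*u*a^3*b^2*c*d^2 + (-2)*u*a^3*b^2*c^2*d + (2)*u*a^3*b^2*c^3 + (-4)*u*a^3*b^3*d^2 + (8)*u*a^3*b^3*c*d + (-4)*u*a^3*b^3*c^2 + (2)*u*a^4*c*d^3 + (-4)*u*a^4*c^2*d^2 + (2)*u*a^4*c^3*d + (-2)*u*a^4*b*d^3 + (2)*u*a^4*b*c*d^2 + (2)*u*a^4*b*c^2*d + (-2)*u*a^4*b*c^3 + (2)*u*a^4*b^2*d^2 + (-4)*u*a^4*b^2*c*d + (2)*u*a^4*b^2*c^2 + (-1)*u^2*b^2*c^2*d^4 + (2)*u^2*b^2*c^3*d^3 + (-1)*u^2*b^2*c^4*d^2 + (3)*u^2*b^3*c*d^4 + (-7)*u^2*b^3*c^2*d^3 + (5)*u^2*b^3*c^3*d^2 + (-1)*u^2*b^3*c^4*d + (-2)*u^2*b^4*d^4 + (5)*u^2*b^4*c*d^3 + (-4)*u^2*b^4*c^2*d^2 + u^2*b^4*c^3*d + (2)*u^2*a*b*c^2*d^4 + (-4)*u^2*a*b*c^3*d^3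 + (2)*u^2*a*b*c^4*d^2 + (-7)*u^2*a*b^2*c*d^4 + (19)*u^2*a*b^2*c^2*d^3 + (-17)*u^2*a*b^2*c^3*d^2 + (5)*u^2*a*b^2*c^4*d + (5)*u^2*a*b^3*d^4 + (-18)*u^2*a*b^3*c*d^3 + (22)*u^2*a*b^3*c^2*d^2 + (-10)*u^2*a*b^3*c^3*d + u^2*a*b^3*c^4 + (3)*u^2*a*b^4*d^3 + (-7)*u^2*a*b^4*c*d^2 + (5)*u^2*a*b^4*c^2*d + (-1)*u^2*a*b^4*c^3 + (-1)*u^2*a^2*c^2*d^4 + (2)*u^2*a^2*c^3*d^3 + (-1)*u^2*a^2*c^4*d^2 + (5)*u^2*a^2*b*c*d^4 + (-17)*u^2*a^2*b*c^2*d^3 + (19)*u^2*a^2*b*c^3*d^2 + (-7)*u^2*a^2*b*c^4*d + (-4)*u^2*a^2*b^2*d^4 + (22)*u^2*a^2*b^2*c*d^3 + (-36)*u^2*a^2*b^2*c^2*d^2 + (22)*u^2*a^2*b^2*c^3*d + (-4)*u^2*a^2*b^2*c^4 + (-7)*u^2*a^2*b^3*d^3 + (19)*u^2*a^2*b^3*c*d^2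 + (-17)*u^2*a^2*b^3*c^2*d + (5)*u^2*a^2*b^3*c^3 + (-1)*u^2*a^2*b^4*d^2 + (2)*u^2*a^2*b^4*c*d + (-1)*u^2*a^2*b^4*c^2 + (-1)*u^2*a^3*c*d^4 + (5)*u^2*a^3*c^2*d^3 + (-7)*u^2*a^3*c^3*d^2 + (3)*u^2*a^3*c^4*d + u^2*a^3*b*d^4 + (-10)*u^2*a^3*b*c*d^3 + (22)*u^2*a^3*b*c^2*d^2 + (-18)*u^2*a^3*b*c^3*d + (5)*u^2*a^3*b*c^4 + (5)*u^2*a^3*b^2*d^3 + (-17)*u^2*a^3*b^2*c*d^2 + (19)*u^2*a^3*b^2*c^2*d + (-7)*u^2*a^3*b^2*c^3 + (2)*u^2*a^3*b^3*d^2 + (-4)*u^2*a^3*b^3*c*d + (2)*u^2*a^3*b^3*c^2 + u^2*a^4*c*d^3 + (-4)*u^2*a^4*c^2*d^2 + (5)*u^2*a^4*c^3*d + (-2)*u^2*a^4*c^4 + (-1)*u^2*a^4*b*d^3 + (5)*u^2*a^4*b*c*d^2 + (-7)*u^2*a^4*b*c^2*d + (3)*u^2*a^4*b*c^3 + (-1)*u^2*a^4*b^2*d^2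 + (2)*u^2*a^4*b^2*c*d + (-1)*u^2*a^4*b^2*c^2) * hs + ((2)*b*c^3*d^4 + (-2)*b*c^4*d^3 + (-4)*b^2*c^2*d^4 + (2)*b^2*c^3*d^3 + (2)*b^2*c^4*d^2 + (2)*b^3*c*d^4 + (2)*b^3*c^2*d^3 + (-4)*b^3*c^3*d^2 + (-2)*b^4*c*d^3 + (2)*b^4*c^2*d^2 + (-2)*a*c^3*d^4 + (2)*a*c^4*d^3 + (2)*a*b*c^2*d^4 + (-4)*a*b*c^3*d^3 + (2)*a*b*c^4*d^2 + (2)*a*b^2*c*d^4 + (4)*a*b^2*c^2*d^3 + (-2)*a*b^2*c^3*d^2 + (-4)*a*b^2*c^4*d + (-2)*a*b^3*d^4 + (-4)*a*b^3*c*d^3 + (-2)*a*b^3*c^2*d^2 + (8)*a*b^3*c^3*d + (2)*a*b^4*d^3 + (2)*a*b^4*c*d^2 + (-4)*a*b^4*c^2*d + (2)*a^2*c^2*d^4 + (2)*a^2*c^3*d^3 + (-4)*a^2*c^4*d^2 + (-4)*a^2*b*c*d^4 + (-2)*a^2*b*c^2*d^3 + (4)*a^2*b*c^3*d^2 + (2)*a^2*b*c^4*d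 + (2)*a^2*b^2*d^4 + (-2)*a^2*b^2*c*d^3 + (-2)*a^2*b^2*c^3*d + (2)*a^2*b^2*c^4 + (2)*a^2*b^3*d^3 + (4)*a^2*b^3*c*d^2 + (-2)*a^2*b^3*c^2*d + (-4)*a^2*b^3*c^3 + (-4)*a^2*b^4*d^2 + (2)*a^2*b^4*c*d + (2)*a^2*b^4*c^2 + (-4)*a^3*c^2*d^3 + (2)*a^3*c^3*d^2 + (2)*a^3*c^4*d + (8)*a^3*b*c*d^3 + (-2)*a^3*b*c^2*d^2 + (-4)*a^3*b*c^3*d + (-2)*a^3*b*c^4 + (-4)*a^3*b^2*d^3 + (-2)*a^3*b^2*c*d^2 + (4)*a^3*b^2*c^2*d + (2)*a^3*b^2*c^3 + (2)*a^3*b^3*d^2 + (-4)*a^3*b^3*c*d + (2)*a^3*b^3*c^2 + (2)*a^3*b^4*d + (-2)*a^3*b^4*c + (2)*a^4*c^2*d^2 + (-2)*a^4*c^3*d + (-4)*a^4*b*c*d^2 + (2)*a^4*b*c^2*d + (2)*a^4*b*c^3 + (2)*a^4*b^2*d^2 + (2)*a^4*b^2*c*d + (-4)*a^4*b^2*c^2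 + (-2)*a^4*b^3*d + (2)*a^4*b^3*c + (2)*s*b*c^3*d^4 + (-2)*s*b*c^4*d^3 + (-4)*s*b^2*c^2*d^4 + (2)*s*b^2*c^3*d^3 + (2)*s*b^2*c^4*d^2 + (2)*s*b^3*c*d^4 + (2)*s*b^3*c^2*d^3 + (-4)*s*b^3*c^3*d^2 + (-2)*s*b^4*c*d^3 + (2)*s*b^4*c^2*d^2 + (-2)*s*a*c^3*d^4 + (2)*s*a*c^4*d^3 + (2)*s*a*b*c^2*d^4 + (-4)*s*a*b*c^3*d^3 + (2)*s*a*b*c^4*d^2 + (2)*s*a*b^2*c*d^4 + (4)*s*a*b^2*c^2*d^3 + (-2)*s*a*b^2*c^3*d^2 + (-4)*s*a*b^2*c^4*d + (-2)*s*a*b^3*d^4 + (-4)*s*a*b^3*c*d^3 + (-2)*s*a*b^3*c^2*d^2 + (8)*s*a*b^3*c^3*d + (2)*s*a*b^4*d^3 + (2)*s*a*b^4*c*d^2 + (-4)*s*a*b^4*c^2*d + (2)*s*a^2*c^2*d^4 + (2)*s*a^2*c^3*d^3 + (-4)*s*a^2*c^4*d^2 + (-4)*s*a^2*b*c*d^4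 + (-2)*s*a^2*b*c^2*d^3 + (4)*s*a^2*b*c^3*d^2 + (2)*s*a^2*b*c^4*d + (2)*s*a^2*b^2*d^4 + (-2)*s*a^2*b^2*c*d^3 + (-2)*s*a^2*b^2*c^3*d + (2)*s*a^2*b^2*c^4 + (2)*s*a^2*b^3*d^3 + (4)*s*a^2*b^3*c*d^2 + (-2)*s*a^2*b^3*c^2*d + (-4)*s*a^2*b^3*c^3 + (-4)*s*a^2*b^4*d^2 + (2)*s*a^2*b^4*c*d + (2)*s*a^2*b^4*c^2 + (-4)*s*a^3*c^2*d^3 + (2)*s*a^3*c^3*d^2 + (2)*s*a^3*c^4*d + (8)*s*a^3*b*c*d^3 + (-2)*s*a^3*b*c^2*d^2 + (-4)*s*a^3*b*c^3*d + (-2)*s*a^3*b*c^4 + (-4)*s*a^3*b^2*d^3 + (-2)*s*a^3*b^2*c*d^2 + (4)*s*a^3*b^2*c^2*d + (2)*s*a^3*b^2*c^3 + (2)*s*a^3*b^3*d^2 + (-4)*s*a^3*b^3*c*d + (2)*s*a^3*b^3*c^2 + (2)*s*a^3*b^4*d + (-2)*s*a^3*b^4*c + (2)*s*a^4*c^2*d^2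 + (-2)*s*a^4*c^3*d + (-4)*s*a^4*b*c*d^2 + (2)*s*a^4*b*c^2*d + (2)*s*a^4*b*c^3 + (2)*s*a^4*b^2*d^2 + (2)*s*a^4*b^2*c*d + (-4)*s*a^4*b^2*c^2 + (-2)*s*a^4*b^3*d + (2)*s*a^4*b^3*c) * hu


private lemma frac_lemma (Y1 Y2 Y3 Y4 DA DB DC DD : ℂ)
    (hDA : DA ≠ 0) (hDB : DB ≠ 0) (hDC : DC ≠ 0) (hDD : DD ≠ 0)
    (hY3 : Y3 ≠ 0) (hY4 : Y4 ≠ 0) (hP : Y1 * Y2 + Y3 * Y4 = 0) :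
    (Y1 / (DA * DB)) * (Y3 / (DB * DC))⁻¹ * (Y2 / (DC * DD)) * (Y4 / (DD * DA))⁻¹ = -1 := by
  rw [inv_div, inv_div, div_mul_div_comm, div_mul_div_comm, div_mul_div_comm]
  rw [div_eq_iff (mul_ne_zero (mul_ne_zero (mul_ne_zero (mul_ne_zero hDA hDB) hY3)
      (mul_ne_zero hDC hDD)) hY4)]
  linear_combination (DA * DB * DC * DD) * hP

set_option maxHeartbeats 2000000 in
private lemma main_alg (a b c d s u : ℂ)
    (nab : a - b ≠ 0) (nca : c - a ≠ 0) (nda : d - a ≠ 0)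
    (ncb : c - b ≠ 0) (ndc : d - c ≠ 0)
    (hs : s ^ 2 * ((d - a) * (c - b)) = (b - d) * (a - c))
    (hu : u ^ 2 * ((a - b) * (d - c)) = (c - a) * (b - d))
    (hDAne : ((a-d)*s + (b-d)) ≠ 0) (hDBne : ((b-a)*u + (c-a)) ≠ 0) (hDCne : ((c-b)*s + (d-b)) ≠ 0) (hDDne : ((d-c)*u + (a-c)) ≠ 0)
    (hY3ne : (((b-a)*u*c + b*(c-a)) * ((c-b)*s + (d-b)) - ((c-b)*s*d + c*(d-b)) * ((b-a)*u + (c-a))) ≠ 0) (hY4ne : (((d-c)*u*a + d*(a-c)) * ((a-d)*s + (b-d)) - ((a-d)*s*b + a*(b-d)) * ((d-c)*u + (a-c))) ≠ 0) :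
    (((a-d)*s*b + a*(b-d))/((a-d)*s + (b-d)) - ((b-a)*u*c + b*(c-a))/((b-a)*u + (c-a))) * (((b-a)*u*c + b*(c-a))/((b-a)*u + (c-a)) - ((c-b)*s*d + c*(d-b))/((c-b)*s + (d-b)))⁻¹ *
      (((c-b)*s*d + c*(d-b))/((c-b)*s + (d-b)) - ((d-c)*u*a + d*(a-c))/((d-c)*u + (a-c))) * (((d-c)*u*a + d*(a-c))/((d-c)*u + (a-c)) - ((a-d)*s*b + a*(b-d))/((a-d)*s + (b-d)))⁻¹ = -1 := by
  have hP : (((a-d)*s*b + a*(b-d)) * ((b-a)*u + (c-a)) - ((b-a)*u*c + b*(c-a)) * ((a-d)*s + (b-d))) * (((c-b)*s*d + c*(d-b)) * ((d-c)*u + (a-c)) - ((d-c)*u*a + d*(a-c)) * ((c-b)*s + (d-b))) + (((b-a)*u*c + b*(c-a)) * ((c-b)*s + (d-b)) - ((c-b)*s*d + c*(d-b)) * ((b-a)*u + (c-a))) * (((d-c)*u*a + d*(a-c)) * ((a-d)*s + (b-d)) - ((a-d)*s*b + a*(b-d)) * ((d-c)*u + (a-c))) = 0 := by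
    have hkey := key_poly a b c d s u hs hu
    have hprod : ((a - b) * (d - c)) * ((d - a) * (c - b)) ≠ 0 :=
      mul_ne_zero (mul_ne_zero nab ndc) (mul_ne_zero nda ncb)
    rcases mul_eq_zero.mp hkey with h | h
    · exact absurd h hprod
    · exact h
  have e1 : ((a-d)*s*b + a*(b-d))/((a-d)*s + (b-d)) - ((b-a)*u*c + b*(c-a))/((b-a)*u + (c-a)) = (((a-d)*s*b + a*(b-d)) * ((b-a)*u + (c-a)) - ((b-a)*u*c + b*(c-a)) * ((a-d)*s + (b-d))) / (((a-d)*s + (b-d)) * ((b-a)*u + (c-a))) := by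
    rw [div_sub_div _ _ hDAne hDBne]; ring_nf
  have e2 : ((b-a)*u*c + b*(c-a))/((b-a)*u + (c-a)) - ((c-b)*s*d + c*(d-b))/((c-b)*s + (d-b)) = (((b-a)*u*c + b*(c-a)) * ((c-b)*s + (d-b)) - ((c-b)*s*d + c*(d-b)) * ((b-a)*u + (c-a))) / (((b-a)*u + (c-a)) * ((c-b)*s + (d-b))) := by
    rw [div_sub_div _ _ hDBne hDCne]; ring_nf
  have e3 : ((c-b)*s*d + c*(d-b))/((c-b)*s + (d-b)) - ((d-c)*u*a + d*(a-c))/((d-c)*u + (a-c)) = (((c-b)*s*d + c*(d-b)) * ((d-c)*u + (a-c)) - ((d-c)*u*a + d*(a-c)) * ((c-b)*s + (d-b))) / (((c-b)*s + (d-b)) * ((d-c)*u + (a-c))) := by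
    rw [div_sub_div _ _ hDCne hDDne]; ring_nf
  have e4 : ((d-c)*u*a + d*(a-c))/((d-c)*u + (a-c)) - ((a-d)*s*b + a*(b-d))/((a-d)*s + (b-d)) = (((d-c)*u*a + d*(a-c)) * ((a-d)*s + (b-d)) - ((a-d)*s*b + a*(b-d)) * ((d-c)*u + (a-c))) / (((d-c)*u + (a-c)) * ((a-d)*s + (b-d))) := by
    rw [div_sub_div _ _ hDDne hDAne]; ring_nf
  rw [e1, e2, e3, e4]
  exact frac_lemma _ _ _ _ _ _ _ _ hDAne hDBne hDCne hDDne hY3ne hY4ne hP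

/-- For four pairwise distinct complex numbers, the four inserting points
`A = f(d,a,b,c)`, `B = f(a,b,c,d)`, `C = f(b,c,d,a)`, `D = f(c,d,a,b)` satisfy
`cro(A,B,C,D) = −1`, assuming the cross-ratios of all cyclic permutations avoid
`ℝ_{≤0}` and all displayed denominators are nonzero. -/
theorem inserting_points_cro_eq_neg_one_complex (a b c d : ℂ)
    (hab : a ≠ b) (hac : a ≠ c) (had : a ≠ d)
    (hbc : b ≠ c) (hbd : b ≠ d) (hcd : c ≠ d)
    (hqA : NotRealNonpos (ccro b d a c)) (hqB : NotRealNonpos (ccro c a b d))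
    (hqC : NotRealNonpos (ccro d b c a)) (hqD : NotRealNonpos (ccro a c d b))
    (hdenA : (a - d) * (b - d)⁻¹ * csqrt (ccro b d a c) + 1 ≠ 0)
    (hdenB : (b - a) * (c - a)⁻¹ * csqrt (ccro c a b d) + 1 ≠ 0)
    (hdenC : (c - b) * (d - b)⁻¹ * csqrt (ccro d b c a) + 1 ≠ 0)
    (hdenD : (d - c) * (a - c)⁻¹ * csqrt (ccro a c d b) + 1 ≠ 0)
    (hBC : cf a b c d ≠ cf b c d a) (hDA : cf c d a b ≠ cf d a b c) :
    ccro (cf d a b c) (cf a b c d) (cf b c d a) (cf c d a b) = -1 := by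
  have nab : a - b ≠ 0 := sub_ne_zero_of_ne hab
  have nba : b - a ≠ 0 := sub_ne_zero_of_ne hab.symm
  have nac : a - c ≠ 0 := sub_ne_zero_of_ne hac
  have nca : c - a ≠ 0 := sub_ne_zero_of_ne hac.symm
  have nad : a - d ≠ 0 := sub_ne_zero_of_ne had
  have nda : d - a ≠ 0 := sub_ne_zero_of_ne had.symm
  have nbc : b - c ≠ 0 := sub_ne_zero_of_ne hbc
  have ncb : c - b ≠ 0 := sub_ne_zero_of_ne hbc.symm
  have nbd : b - d ≠ 0 := sub_ne_zero_of_ne hbd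
  have ndb : d - b ≠ 0 := sub_ne_zero_of_ne hbd.symm
  have ncd : c - d ≠ 0 := sub_ne_zero_of_ne hcd
  have ndc : d - c ≠ 0 := sub_ne_zero_of_ne hcd.symm
  have eqC : ccro d b c a = ccro b d a c := by
    unfold ccro; field_simp; ring
  have eqD : ccro a c d b = ccro c a b d := by
    unfold ccro; field_simp; ring
  -- cf as fractions
  have hA := cf_eq d a b c nbd hdenA
  have hB := cf_eq a b c d nca hdenB
  have hC := cf_eq b c d a ndb hdenC
  have hD := cf_eq c d a b nac hdenD
  rw [eqC] at hC
  rw [eqD] at hD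
  have hDAne := cf_den_ne d a b c nbd hdenA
  have hDBne := cf_den_ne a b c d nca hdenB
  have hDCne := cf_den_ne b c d a ndb hdenC
  have hDDne := cf_den_ne c d a b nac hdenD
  rw [eqC] at hDCne
  rw [eqD] at hDDne
  have hs : csqrt (ccro b d a c) ^ 2 * ((d - a) * (c - b)) = (b - d) * (a - c) := by
    rw [csqrt_sq (notRealNonpos_ne_zero hqA)]; unfold ccro; field_simp
  have hu : csqrt (ccro c a b d) ^ 2 * ((a - b) * (d - c)) = (c - a) * (b - d) := by
    rw [csqrt_sq (notRealNonpos_ne_zero hqB)]; unfold ccro; field_simp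
  rw [hB, hC] at hBC
  rw [hD, hA] at hDA
  rw [ccro, hA, hB, hC, hD]
  generalize hgs : csqrt (ccro b d a c) = s at *
  generalize hgu : csqrt (ccro c a b d) = u at *
  have hY3ne : (((b-a)*u*c + b*(c-a)) * ((c-b)*s + (d-b)) - ((c-b)*s*d + c*(d-b)) * ((b-a)*u + (c-a))) ≠ 0 := by
    intro h
    apply hBC
    rw [div_eq_div_iff hDBne hDCne]
    linear_combination h
  have hY4ne : (((d-c)*u*a + d*(a-c)) * ((a-d)*s + (b-d)) - ((a-d)*s*b + a*(b-d)) * ((d-c)*u + (a-c))) ≠ 0 := by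
    intro h
    apply hDA
    rw [div_eq_div_iff hDDne hDAne]
    linear_combination h
  exact main_alg a b c d s u nab nca nda ncb ndc hs hu hDAne hDBne hDCne hDDne hY3ne hY4ne

end
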